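/- Let n ≥ 2. Every sublinear generalized frame function f : ℂⁿ → ℝ is identically zero. -/

import Mathlib

open scoped InnerProductSpace

/-- A function `f : ℂⁿ → ℝ` is sublinear if `f(v)/‖v‖ → 0` as `‖v‖ → ∞`. -/
def SublinearCn {n : ℕ} (f : EuclideanSpace ℂ (Fin n) → ℝ) : Prop :=
  Filter.Tendsto (fun v => f v / ‖v‖)
    (Filter.comap (fun v : EuclideanSpace ℂ (Fin n) => ‖v‖) Filter.atTop) (nhds 0)

/-!
Write `F x = f x + f (-x)`. If `v ⊥ w` have equal norms then `v + w ⊥ v - w`, hence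
`f (2v) = f (v + w) + f (v - w) = 2 f v + F w`. Applied to `x = 2v` and to its companion `2w` this
yields `F (2x) = 4 F x`, which sublinearity along the dyadic sequence `2ᵏ x` allows only if
`F x = 0`. Then `f (2x) = 2 f x`, so `f (2ᵏ x) / 2ᵏ` is constant and sublinearity forces `f x = 0`.
-/

open Filter Topology Module

theorem eq_zero_of_tendsto_div_pow {a : ℕ → ℝ} {r c : ℝ} (hr : 0 < r) (hrc : r ≤ c)
    (ha : ∀ k, a (k + 1) = c * a k) (hlim : Tendsto (fun k => a k / r ^ k) atTop (𝓝 0)) :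
    a 0 = 0 := by
  have hgrowth : ∀ k, |a 0| ≤ |a k / r ^ k| := by
    intro k
    have hak : a k = c ^ k * a 0 := by
      induction k with
      | zero => simp
      | succ k ih => rw [ha, ih, pow_succ]; ring
    rw [hak, mul_div_right_comm, ← div_pow, abs_mul, abs_pow]
    exact le_mul_of_one_le_left (abs_nonneg _)
      (one_le_pow₀ (((one_le_div hr).mpr hrc).trans (le_abs_self _)))
  exact abs_nonpos_iff.mp (ge_of_tendsto' (by simpa using hlim.abs) hgrowth)

theorem tendsto_div_two_pow_of_sublinear (𝕜 : Type*) {E : Type*} [RCLike 𝕜] [NormedAddCommGroup E]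
    [NormedSpace 𝕜 E] {f : E → ℝ}
    (hsub : Tendsto (fun v => f v / ‖v‖) (comap (‖·‖) atTop) (𝓝 0)) {x : E} (hx : x ≠ 0) :
    Tendsto (fun k : ℕ => f ((2 : 𝕜) ^ k • x) / 2 ^ k) atTop (𝓝 0) := by
  have hnorm : ∀ k : ℕ, ‖(2 : 𝕜) ^ k • x‖ = 2 ^ k * ‖x‖ := fun k => by
    rw [norm_smul, norm_pow, RCLike.norm_ofNat]
  have hescape : Tendsto (fun k : ℕ => (2 : 𝕜) ^ k • x) atTop (comap (‖·‖) atTop) := by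
    rw [tendsto_comap_iff, Function.comp_def]
    simp_rw [hnorm]
    exact (tendsto_pow_atTop_atTop_of_one_lt one_lt_two).atTop_mul_const (norm_pos_iff.mpr hx)
  have := (hsub.comp hescape).mul_const ‖x‖
  rw [zero_mul] at this
  refine this.congr fun k => ?_
  simp only [Function.comp_apply, hnorm]
  field_simp [norm_ne_zero_iff.mpr hx]

section

variable {𝕜 E : Type*} [RCLike 𝕜] [NormedAddCommGroup E] [InnerProductSpace 𝕜 E]

theorem exists_inner_eq_zero_norm_eq [FiniteDimensional 𝕜 E] (hE : 2 ≤ finrank 𝕜 E) (v : E) :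
    ∃ w : E, ⟪v, w⟫_𝕜 = 0 ∧ ‖w‖ = ‖v‖ := by
  rcases eq_or_ne v 0 with rfl | hv
  · exact ⟨0, inner_zero_left 0, rfl⟩
  obtain ⟨u, hu, hu0⟩ : ∃ u ∈ (𝕜 ∙ v)ᗮ, u ≠ 0 := by
    refine Submodule.exists_mem_ne_zero_of_ne_bot fun h => ?_
    have := (𝕜 ∙ v).finrank_add_finrank_orthogonal
    rw [h, finrank_bot, finrank_span_singleton hv] at this
    omega
  refine ⟨((‖v‖ / ‖u‖ : ℝ) : 𝕜) • u, ?_, ?_⟩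
  · rw [inner_smul_right, Submodule.mem_orthogonal_singleton_iff_inner_right.mp hu, mul_zero]
  · rw [norm_smul, RCLike.norm_ofReal, abs_of_nonneg (by positivity),
      div_mul_cancel₀ _ (norm_ne_zero_iff.mpr hu0)]

theorem add_ne_zero_of_inner_eq_zero {v w : E} (hv : v ≠ 0) (hvw : ⟪v, w⟫_𝕜 = 0) : v + w ≠ 0 := by
  intro hsum
  have := norm_add_sq_eq_norm_sq_add_norm_sq_of_inner_eq_zero v w hvw
  rw [hsum, norm_zero] at this
  nlinarith [norm_pos_iff.mpr hv, sq_nonneg ‖w‖]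

variable (𝕜) in
def IsGeneralizedFrameFunction (f : E → ℝ) : Prop :=
  ∀ u v : E, u ≠ 0 → v ≠ 0 → ⟪u, v⟫_𝕜 = 0 → f (u + v) = f u + f v

namespace IsGeneralizedFrameFunction

variable {f : E → ℝ}

theorem apply_two_smul (hf : IsGeneralizedFrameFunction 𝕜 f) {v w : E} (hv : v ≠ 0)
    (hvw : ⟪v, w⟫_𝕜 = 0) (hnorm : ‖w‖ = ‖v‖) :
    f ((2 : 𝕜) • v) = 2 * f v + (f w + f (-w)) := by
  have hw : w ≠ 0 := norm_ne_zero_iff.mp (hnorm ▸ norm_ne_zero_iff.mpr hv)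
  have hwv : ⟪w, v⟫_𝕜 = 0 := inner_eq_zero_symm.mp hvw
  have hvw' : ⟪v, -w⟫_𝕜 = 0 := by rw [inner_neg_right, hvw, neg_zero]
  have hdiag : ⟪v + w, v - w⟫_𝕜 = 0 := by
    simp only [inner_add_left, inner_sub_right, hvw, hwv, inner_self_eq_norm_sq_to_K, hnorm]
    ring
  have hsplit : f ((2 : 𝕜) • v) = f (v + w) + f (v - w) := by
    rw [← hf _ _ (add_ne_zero_of_inner_eq_zero hv hvw)
      (sub_eq_add_neg v w ▸ add_ne_zero_of_inner_eq_zero hv hvw') hdiag, two_smul]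
    abel_nf
  rw [hsplit, hf v w hv hw hvw, sub_eq_add_neg, hf v (-w) hv (neg_ne_zero.mpr hw) hvw']
  ring

theorem even_two_smul (hf : IsGeneralizedFrameFunction 𝕜 f) {v w : E} (hv : v ≠ 0)
    (hvw : ⟪v, w⟫_𝕜 = 0) (hnorm : ‖w‖ = ‖v‖) :
    f ((2 : 𝕜) • v) + f (-((2 : 𝕜) • v)) = 2 * (f v + f (-v)) + 2 * (f w + f (-w)) := by
  rw [← smul_neg, hf.apply_two_smul hv hvw hnorm,
    hf.apply_two_smul (neg_ne_zero.mpr hv) (by rw [inner_neg_left, hvw, neg_zero])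
      (by rw [hnorm, norm_neg])]
  ring

theorem even_two_smul_eq_four_mul [FiniteDimensional 𝕜 E] (hE : 2 ≤ finrank 𝕜 E)
    (hf : IsGeneralizedFrameFunction 𝕜 f) {x : E} (hx : x ≠ 0) :
    f ((2 : 𝕜) • x) + f (-((2 : 𝕜) • x)) = 4 * (f x + f (-x)) := by
  set v := (2⁻¹ : 𝕜) • x
  have hxv : x = (2 : 𝕜) • v := by simp [v, smul_smul]
  have hv : v ≠ 0 := smul_ne_zero (by norm_num) hx
  obtain ⟨w, hvw, hnorm⟩ := exists_inner_eq_zero_norm_eq hE v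
  have hw : w ≠ 0 := norm_ne_zero_iff.mp (hnorm ▸ norm_ne_zero_iff.mpr hv)
  have hx2w : ⟪x, (2 : 𝕜) • w⟫_𝕜 = 0 := by
    rw [hxv, inner_smul_left, inner_smul_right, hvw, mul_zero, mul_zero]
  have hnorm2 : ‖(2 : 𝕜) • w‖ = ‖x‖ := by rw [hxv, norm_smul, norm_smul, hnorm]
  have hsame : f x + f (-x) = f ((2 : 𝕜) • w) + f (-((2 : 𝕜) • w)) := by
    rw [hxv, hf.even_two_smul hv hvw hnorm,
      hf.even_two_smul hw (inner_eq_zero_symm.mp hvw) hnorm.symm]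
    ring
  rw [hf.even_two_smul hx hx2w hnorm2, ← hsame]
  ring

theorem even_eq_zero [FiniteDimensional 𝕜 E] (hE : 2 ≤ finrank 𝕜 E)
    (hf : IsGeneralizedFrameFunction 𝕜 f)
    (hsub : Tendsto (fun v => f v / ‖v‖) (comap (‖·‖) atTop) (𝓝 0)) {x : E} (hx : x ≠ 0) :
    f x + f (-x) = 0 := by
  have hdyadic : ∀ k : ℕ, (2 : 𝕜) ^ k • x ≠ 0 := fun k =>
    smul_ne_zero (pow_ne_zero k two_ne_zero) hx
  have hlim := (tendsto_div_two_pow_of_sublinear 𝕜 hsub hx).add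
    (tendsto_div_two_pow_of_sublinear 𝕜 hsub (neg_ne_zero.mpr hx))
  simp only [smul_neg, ← add_div, add_zero] at hlim
  simpa using eq_zero_of_tendsto_div_pow (r := 2) (c := 4) two_pos (by norm_num)
    (a := fun k => f ((2 : 𝕜) ^ k • x) + f (-((2 : 𝕜) ^ k • x)))
    (fun k => by
      simpa only [pow_succ', smul_smul] using hf.even_two_smul_eq_four_mul hE (hdyadic k))
    hlim

theorem apply_eq_zero [FiniteDimensional 𝕜 E] (hE : 2 ≤ finrank 𝕜 E)
    (hf : IsGeneralizedFrameFunction 𝕜 f)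
    (hsub : Tendsto (fun v => f v / ‖v‖) (comap (‖·‖) atTop) (𝓝 0)) {x : E} (hx : x ≠ 0) :
    f x = 0 := by
  have hdouble : ∀ y : E, y ≠ 0 → f ((2 : 𝕜) • y) = 2 * f y := fun y hy => by
    obtain ⟨w, hyw, hnorm⟩ := exists_inner_eq_zero_norm_eq hE y
    have hw : w ≠ 0 := norm_ne_zero_iff.mp (hnorm ▸ norm_ne_zero_iff.mpr hy)
    rw [hf.apply_two_smul hy hyw hnorm, hf.even_eq_zero hE hsub hw, add_zero]
  simpa using eq_zero_of_tendsto_div_pow (r := 2) (c := 2) two_pos le_rfl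
    (a := fun k => f ((2 : 𝕜) ^ k • x))
    (fun k => by
      simpa only [pow_succ', smul_smul] using
        hdouble ((2 : 𝕜) ^ k • x) (smul_ne_zero (pow_ne_zero k two_ne_zero) hx))
    (tendsto_div_two_pow_of_sublinear 𝕜 hsub hx)

end IsGeneralizedFrameFunction

end

/-- Every sublinear generalized frame function on ℂⁿ, n ≥ 2, is identically zero. -/
theorem sublinear_generalized_frame_function_trivial
    (n : ℕ) (hn : 2 ≤ n) (f : EuclideanSpace ℂ (Fin n) → ℝ)
    (hf0 : f 0 = 0)
    (hframe : ∀ u v : EuclideanSpace ℂ (Fin n), u ≠ 0 → v ≠ 0 → ⟪u, v⟫_ℂ = 0 →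
      f (u + v) = f u + f v)
    (hsub : SublinearCn f) :
    ∀ v, f v = 0 := by
  have hE : 2 ≤ finrank ℂ (EuclideanSpace ℂ (Fin n)) := by rwa [finrank_euclideanSpace_fin]
  intro v
  rcases eq_or_ne v 0 with rfl | hv
  · exact hf0
  · exact IsGeneralizedFrameFunction.apply_eq_zero hE hframe hsub hv
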